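/- arXiv:2211.06219 — 3 statements merged into one kernel-verified Lean document; each statement's English description precedes it below -/
import Mathlib

section
/- For g ≥ 1, the action of Sp_{2g}(Z) on the set of quadratic refinements of (Z^{2g}, Ω_g) has exactly two orbits, distinguished by the Arf invariant; in particular two quadratic refinements q, q' satisfy Arf(q) = Arf(q') if and only if there exists φ ∈ Sp_{2g}(Z) with q' = q ∘ φ. -/
/-- The standard symplectic pairing on `ℤ^{2g}`, with basis indexed by `Fin g × Bool`
(`(i, false)` is `e_i` and `(i, true)` is `f_i`). -/
def sympPair (g : ℕ) (x y : Fin g × Bool → ℤ) : ℤ :=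
  ∑ i : Fin g, (x (i, false) * y (i, true) - x (i, true) * y (i, false))

/-- A quadratic refinement of the standard symplectic form `Ω_g` on `ℤ^{2g}`. -/
def IsQuadRef (g : ℕ) (q : (Fin g × Bool → ℤ) → ZMod 2) : Prop :=
  ∀ x y, q (x + y) = q x + q y + ((sympPair g x y : ℤ) : ZMod 2)

/-- The standard basis vector of `ℤ^{2g}` indexed by `p`. -/
def stdBasis (g : ℕ) (p : Fin g × Bool) : Fin g × Bool → ℤ :=
  fun r => if r = p then 1 else 0

/-- The Arf invariant `Arf(q) = ∑ q(e_i) q(f_i)`. -/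
def arf (g : ℕ) (q : (Fin g × Bool → ℤ) → ZMod 2) : ZMod 2 :=
  ∑ i : Fin g, q (stdBasis g (i, false)) * q (stdBasis g (i, true))

/-- A linear automorphism of `ℤ^{2g}` is symplectic if it preserves the standard symplectic
pairing; `Sp_{2g}(ℤ) = Aut(ℤ^{2g}, Ω_g)` consists of such automorphisms. -/
def IsSymp (g : ℕ) (φ : (Fin g × Bool → ℤ) ≃ₗ[ℤ] (Fin g × Bool → ℤ)) : Prop :=
  ∀ x y, sympPair g (φ x) (φ y) = sympPair g x y

namespace StmtFive

variable {g : ℕ}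

/-- reduction mod 2 -/
def red (x : Fin g × Bool → ℤ) : Fin g × Bool → ZMod 2 := fun p => (x p : ZMod 2)

/-- lift to ℤ with {0,1} entries -/
def liftZ (u : Fin g × Bool → ZMod 2) : Fin g × Bool → ℤ := fun p => ((u p).val : ℤ)

/-- the F₂ quadratic form with basis values `a` -/
def q2 (a u : Fin g × Bool → ZMod 2) : ZMod 2 :=
  ∑ i : Fin g, (u (i, false) * a (i, false) + u (i, true) * a (i, true)
    + u (i, false) * u (i, true))

/-- the F₂ symplectic pairing -/
def b2 (u v : Fin g × Bool → ZMod 2) : ZMod 2 :=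
  ∑ i : Fin g, (u (i, false) * v (i, true) + u (i, true) * v (i, false))

def arf2 (a : Fin g × Bool → ZMod 2) : ZMod 2 := ∑ i : Fin g, a (i, false) * a (i, true)

def swapF (w : Fin g × Bool → ZMod 2) : Fin g × Bool → ZMod 2 := fun p => w (p.1, !p.2)

def bv (q : (Fin g × Bool → ℤ) → ZMod 2) : Fin g × Bool → ZMod 2 :=
  fun p => q (stdBasis g p)

def dl (p : Fin g × Bool) : Fin g × Bool → ZMod 2 := fun r => if r = p then 1 else 0

lemma red_lift (u : Fin g × Bool → ZMod 2) : red (liftZ u) = u := by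
  funext p
  simp [red, liftZ, ZMod.natCast_val, ZMod.cast_id]

lemma red_add (x y : Fin g × Bool → ℤ) : red (x + y) = red x + red y := by
  funext p; simp [red]

lemma red_smul (k : ℤ) (x : Fin g × Bool → ℤ) :
    red (k • x) = (k : ZMod 2) • red x := by
  funext p; simp [red]

lemma red_stdBasis (p : Fin g × Bool) : red (stdBasis g p) = dl p := by
  funext r
  simp [red, stdBasis, dl, apply_ite (Int.cast : ℤ → ZMod 2)]

/- ### sympPair lemmas -/

lemma sympPair_add_left (x y z : Fin g × Bool → ℤ) :
    sympPair g (x + y) z = sympPair g x z + sympPair g y z := by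
  unfold sympPair
  rw [← Finset.sum_add_distrib]
  exact Finset.sum_congr rfl fun i _ => by simp [Pi.add_apply]; ring

lemma sympPair_add_right (x y z : Fin g × Bool → ℤ) :
    sympPair g x (y + z) = sympPair g x y + sympPair g x z := by
  unfold sympPair
  rw [← Finset.sum_add_distrib]
  exact Finset.sum_congr rfl fun i _ => by simp [Pi.add_apply]; ring

lemma sympPair_smul_left (k : ℤ) (x y : Fin g × Bool → ℤ) :
    sympPair g (k • x) y = k * sympPair g x y := by
  unfold sympPair
  rw [Finset.mul_sum]
  exact Finset.sum_congr rfl fun i _ => by simp [Pi.smul_apply]; ring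

lemma sympPair_smul_right (k : ℤ) (x y : Fin g × Bool → ℤ) :
    sympPair g x (k • y) = k * sympPair g x y := by
  unfold sympPair
  rw [Finset.mul_sum]
  exact Finset.sum_congr rfl fun i _ => by simp [Pi.smul_apply]; ring

lemma sympPair_self (x : Fin g × Bool → ℤ) : sympPair g x x = 0 :=
  Finset.sum_eq_zero fun i _ => by ring

lemma sympPair_comm (x y : Fin g × Bool → ℤ) : sympPair g x y = -sympPair g y x := by
  unfold sympPair
  rw [← Finset.sum_neg_distrib]
  exact Finset.sum_congr rfl fun i _ => by ring

/- ### transvections -/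

/-- the symplectic transvection along `v` -/
def tv (g : ℕ) (v : Fin g × Bool → ℤ) :
    (Fin g × Bool → ℤ) ≃ₗ[ℤ] (Fin g × Bool → ℤ) where
  toFun x := x + sympPair g x v • v
  invFun x := x + (-sympPair g x v) • v
  map_add' x y := by
    show (x + y) + sympPair g (x + y) v • v = _
    rw [sympPair_add_left, add_smul]; abel
  map_smul' k x := by
    show (k • x) + sympPair g (k • x) v • v = _
    simp only [RingHom.id_apply, sympPair_smul_left, smul_add, mul_smul]
  left_inv x := by
    show (x + sympPair g x v • v) + _ • v = x
    simp only [sympPair_add_left, sympPair_smul_left, sympPair_self, mul_zero, add_zero,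
      neg_smul, add_neg_cancel_right]
  right_inv x := by
    show (x + (-sympPair g x v) • v) + sympPair g (x + (-sympPair g x v) • v) v • v = x
    have h : sympPair g (x + (-sympPair g x v) • v) v = sympPair g x v := by
      rw [sympPair_add_left, sympPair_smul_left, sympPair_self, mul_zero, add_zero]
    rw [h, neg_smul]
    abel

lemma tv_apply (v x : Fin g × Bool → ℤ) : tv g v x = x + sympPair g x v • v := rfl

lemma isSymp_tv (v : Fin g × Bool → ℤ) : IsSymp g (tv g v) := by
  intro x y
  rw [tv_apply, tv_apply]
  simp only [sympPair_add_left, sympPair_add_right, sympPair_smul_left, sympPair_smul_right,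
    sympPair_self, mul_zero, add_zero, zero_add]
  rw [sympPair_comm v y]
  ring

/- ### F₂-level algebra -/

lemma q2_add (a u v : Fin g × Bool → ZMod 2) :
    q2 a (u + v) = q2 a u + q2 a v + b2 u v := by
  unfold q2 b2
  rw [← Finset.sum_add_distrib, ← Finset.sum_add_distrib]
  exact Finset.sum_congr rfl fun i _ => by simp only [Pi.add_apply]; ring

lemma q2_smul (a : Fin g × Bool → ZMod 2) (c : ZMod 2) (u : Fin g × Bool → ZMod 2) :
    q2 a (c • u) = c * q2 a u := by
  unfold q2
  rw [Finset.mul_sum]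
  refine Finset.sum_congr rfl fun i _ => ?_
  simp only [Pi.smul_apply, smul_eq_mul]
  generalize u (i, false) = x; generalize u (i, true) = y
  generalize a (i, false) = A; generalize a (i, true) = B
  revert c x y A B; decide

lemma b2_smul_right (u v : Fin g × Bool → ZMod 2) (c : ZMod 2) :
    b2 u (c • v) = c * b2 u v := by
  unfold b2
  rw [Finset.mul_sum]
  exact Finset.sum_congr rfl fun i _ => by simp only [Pi.smul_apply, smul_eq_mul]; ring

/-- the key identity: changing `a` by `w` changes the Arf invariant by `q2 a (swapF w)`. -/
lemma arf2_add (a w : Fin g × Bool → ZMod 2) :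
    arf2 (a + w) = arf2 a + q2 a (swapF w) := by
  unfold arf2 q2
  rw [← Finset.sum_add_distrib]
  refine Finset.sum_congr rfl fun i _ => ?_
  simp only [Pi.add_apply, swapF, Bool.not_false, Bool.not_true]
  ring

lemma q2_dl (a : Fin g × Bool → ZMod 2) (p : Fin g × Bool) : q2 a (dl p) = a p := by
  obtain ⟨j, b⟩ := p
  unfold q2 dl
  cases b
  · rw [Finset.sum_eq_single j]
    · simp [Prod.ext_iff]
    · intro i _ hij
      simp [Prod.ext_iff, hij]
    · simp
  · rw [Finset.sum_eq_single j]
    · simp [Prod.ext_iff]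
    · intro i _ hij
      simp [Prod.ext_iff, hij]
    · simp

lemma b2_dl_swap (p : Fin g × Bool) (w : Fin g × Bool → ZMod 2) :
    b2 (dl p) (swapF w) = w p := by
  obtain ⟨j, b⟩ := p
  unfold b2 dl swapF
  cases b
  · rw [Finset.sum_eq_single j]
    · simp [Prod.ext_iff]
    · intro i _ hij
      simp [Prod.ext_iff, hij]
    · simp
  · rw [Finset.sum_eq_single j]
    · simp [Prod.ext_iff]
    · intro i _ hij
      simp [Prod.ext_iff, hij]
    · simp

lemma sympPair_stdBasis_liftSwap (p : Fin g × Bool) (w : Fin g × Bool → ZMod 2) :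
    ((sympPair g (stdBasis g p) (liftZ (swapF w)) : ℤ) : ZMod 2) = w p := by
  obtain ⟨j, b⟩ := p
  unfold sympPair stdBasis liftZ swapF
  cases b
  · rw [Finset.sum_eq_single j]
    · simp [Prod.ext_iff, ZMod.natCast_val, ZMod.cast_id]
    · intro i _ hij
      simp [Prod.ext_iff, hij]
    · simp
  · rw [Finset.sum_eq_single j]
    · push_cast
      simp [Prod.ext_iff, ZMod.natCast_val, ZMod.cast_id, CharTwo.neg_eq]
    · intro i _ hij
      simp [Prod.ext_iff, hij]
    · simp

/- ### quadratic refinements are determined by basis values -/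

lemma cast_sympPair (x y : Fin g × Bool → ℤ) :
    ((sympPair g x y : ℤ) : ZMod 2) = b2 (red x) (red y) := by
  unfold sympPair b2 red
  push_cast
  refine Finset.sum_congr rfl fun i _ => ?_
  rw [CharTwo.sub_eq_add]

lemma isQuadRef_q2red (a : Fin g × Bool → ZMod 2) :
    IsQuadRef g (fun x => q2 a (red x)) := by
  intro x y
  show q2 a (red (x + y)) = _
  rw [red_add, q2_add, cast_sympPair]

lemma quadRef_ext {q Q : (Fin g × Bool → ℤ) → ZMod 2} (hq : IsQuadRef g q)
    (hQ : IsQuadRef g Q) (h : ∀ p, q (stdBasis g p) = Q (stdBasis g p)) : q = Q := by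
  have hd : ∀ x y, (q (x + y) - Q (x + y)) = (q x - Q x) + (q y - Q y) := by
    intro x y; rw [hq, hQ]; ring
  let D : (Fin g × Bool → ℤ) →+ ZMod 2 := AddMonoidHom.mk' (fun x => q x - Q x) hd
  have hD : ∀ x, D x = 0 := by
    intro x
    have hx : x = ∑ p : Fin g × Bool, x p • stdBasis g p := by
      have h2 : stdBasis g = fun p r => if p = r then (1 : ℤ) else 0 := by
        funext p r; simp [stdBasis, eq_comm]
      rw [h2]; exact pi_eq_sum_univ x
    rw [hx, map_sum]
    refine Finset.sum_eq_zero fun p _ => ?_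
    rw [map_zsmul]
    have : D (stdBasis g p) = 0 := by
      show q (stdBasis g p) - Q (stdBasis g p) = 0
      rw [h p, sub_self]
    rw [this, smul_zero]
  funext x
  have := hD x
  have : q x - Q x = 0 := this
  linear_combination (norm := ring_nf) this

lemma quadRef_formula {q : (Fin g × Bool → ℤ) → ZMod 2} (hq : IsQuadRef g q) :
    q = fun x => q2 (bv q) (red x) := by
  refine quadRef_ext hq (isQuadRef_q2red _) fun p => ?_
  rw [red_stdBasis, q2_dl]
  rfl

lemma arf_eq_arf2 (q : (Fin g × Bool → ℤ) → ZMod 2) : arf g q = arf2 (bv q) := rfl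

lemma isQuadRef_comp {q : (Fin g × Bool → ℤ) → ZMod 2}
    {φ : (Fin g × Bool → ℤ) ≃ₗ[ℤ] (Fin g × Bool → ℤ)} (hq : IsQuadRef g q)
    (hφ : IsSymp g φ) : IsQuadRef g (q ∘ ⇑φ) := by
  intro x y
  show q (φ (x + y)) = q (φ x) + q (φ y) + _
  rw [map_add, hq, hφ]

lemma zmod2_mul_self (c : ZMod 2) : c * c = c := by revert c; decide

lemma zmod2_add_add (c c' : ZMod 2) : c + (c + c') = c' := by revert c c'; decide

/-- the forward direction: equal Arf invariants give a (transvection) symplectic map. -/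
lemma forward {q q' : (Fin g × Bool → ℤ) → ZMod 2} (hq : IsQuadRef g q)
    (hq' : IsQuadRef g q') (harf : arf g q = arf g q') :
    ∃ φ : (Fin g × Bool → ℤ) ≃ₗ[ℤ] (Fin g × Bool → ℤ), IsSymp g φ ∧ q' = q ∘ ⇑φ := by
  set a : Fin g × Bool → ZMod 2 := bv q with ha
  set a' : Fin g × Bool → ZMod 2 := bv q' with ha'
  set w : Fin g × Bool → ZMod 2 := a + a' with hw
  have haw : a + w = a' := by
    funext p
    exact zmod2_add_add (a p) (a' p)
  have harf2 : arf2 a = arf2 a' := harf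
  have hw0 : q2 a (swapF w) = 0 := by
    have h1 : arf2 (a + w) = arf2 a + q2 a (swapF w) := arf2_add a w
    rw [haw, ← harf2, left_eq_add] at h1
    exact h1
  set v : Fin g × Bool → ℤ := liftZ (swapF w) with hv
  refine ⟨tv g v, isSymp_tv v, ?_⟩
  refine quadRef_ext hq' (isQuadRef_comp hq (isSymp_tv v)) fun p => ?_
  show q' (stdBasis g p) = q (tv g v (stdBasis g p))
  have hqf := quadRef_formula hq
  have hred : red (tv g v (stdBasis g p)) = dl p + (w p) • swapF w := by
    rw [tv_apply, red_add, red_smul, red_stdBasis, hv, red_lift,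
      sympPair_stdBasis_liftSwap]
  calc q' (stdBasis g p) = a' p := rfl
    _ = q2 a (red (tv g v (stdBasis g p))) := by
        rw [hred, q2_add, q2_dl, q2_smul, hw0, mul_zero, add_zero, b2_smul_right,
          b2_dl_swap, zmod2_mul_self, ← haw]
        rfl
    _ = q (tv g v (stdBasis g p)) := by rw [hqf]

/- ### the Gauss sum and invariance of the Arf invariant -/

def chi : ZMod 2 → ℤ := fun c => if c = 0 then 1 else -1

lemma chi_add (x y : ZMod 2) : chi (x + y) = chi x * chi y := by revert x y; decide

lemma chi_zero : chi 0 = 1 := rfl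

lemma chi_inj {x y : ZMod 2} (h : chi x = chi y) : x = y := by revert x y h; decide

lemma chi_sum {ι : Type*} (s : Finset ι) (f : ι → ZMod 2) :
    chi (∑ i ∈ s, f i) = ∏ i ∈ s, chi (f i) := by
  classical
  induction s using Finset.induction_on with
  | empty => simp [chi_zero]
  | insert _ _ hx ih =>
      rw [Finset.sum_insert hx, Finset.prod_insert hx, chi_add, ih]

lemma gauss_local (A B : ZMod 2) :
    ∑ w : Bool → ZMod 2, chi (w false * A + w true * B + w false * w true)
      = 2 * chi (A * B) := by
  revert A B; decide

lemma red_congr (ψ : (Fin g × Bool → ℤ) →ₗ[ℤ] (Fin g × Bool → ℤ)) {x x' : Fin g × Bool → ℤ}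
    (h : red x = red x') : red (ψ x) = red (ψ x') := by
  have hdvd : ∀ p, (2 : ℤ) ∣ (x - x') p := by
    intro p
    have hp : ((x p : ZMod 2)) = ((x' p : ZMod 2)) := congrFun h p
    have : (((x - x') p : ℤ) : ZMod 2) = 0 := by
      simp only [Pi.sub_apply]
      push_cast
      rw [hp, sub_self]
    exact_mod_cast (ZMod.intCast_zmod_eq_zero_iff_dvd _ 2).mp this
  set e : Fin g × Bool → ℤ := fun p => (x - x') p / 2 with he
  have hxe : x = x' + (2 : ℤ) • e := by
    funext p
    have h2 : (2 : ℤ) * ((x p - x' p) / 2) = x p - x' p :=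
      Int.mul_ediv_cancel' (by simpa using hdvd p)
    simp only [Pi.add_apply, Pi.smul_apply, he, smul_eq_mul, Pi.sub_apply]
    omega
  rw [hxe, map_add, map_smul]
  funext p
  simp only [red, Pi.add_apply, Pi.smul_apply, smul_eq_mul]
  push_cast
  rw [show (2 : ZMod 2) = 0 by decide]
  ring

/-- the mod-2 reduction of a linear automorphism of `ℤ^{2g}`, as a bijection. -/
def redEquiv (φ : (Fin g × Bool → ℤ) ≃ₗ[ℤ] (Fin g × Bool → ℤ)) :
    (Fin g × Bool → ZMod 2) ≃ (Fin g × Bool → ZMod 2) where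
  toFun u := red (φ (liftZ u))
  invFun u := red (φ.symm (liftZ u))
  left_inv u := by
    have h := red_congr (φ.symm : _ →ₗ[ℤ] _) (red_lift (red (φ (liftZ u))))
    simp only [LinearEquiv.coe_coe] at h
    show red (φ.symm (liftZ (red (φ (liftZ u))))) = u
    rw [h, LinearEquiv.symm_apply_apply, red_lift]
  right_inv u := by
    have h := red_congr (φ : _ →ₗ[ℤ] _) (red_lift (red (φ.symm (liftZ u))))
    simp only [LinearEquiv.coe_coe] at h
    show red (φ (liftZ (red (φ.symm (liftZ u))))) = u
    rw [h, LinearEquiv.apply_symm_apply, red_lift]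

lemma gauss_sum_eq {q : (Fin g × Bool → ℤ) → ZMod 2} (hq : IsQuadRef g q) :
    ∑ u : Fin g × Bool → ZMod 2, chi (q (liftZ u)) = 2 ^ g * chi (arf2 (bv q)) := by
  set a : Fin g × Bool → ZMod 2 := bv q with ha
  have hqf := quadRef_formula hq
  have h1 : ∀ u : Fin g × Bool → ZMod 2, q (liftZ u) = q2 a u := by
    intro u
    rw [hqf]
    show q2 (bv q) (red (liftZ u)) = q2 a u
    rw [red_lift]
  simp only [h1]
  set F : Fin g → (Bool → ZMod 2) → ℤ := fun i w =>
    chi (w false * a (i, false) + w true * a (i, true) + w false * w true) with hF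
  have h2 : ∀ u : Fin g × Bool → ZMod 2, chi (q2 a u) = ∏ i : Fin g, F i (fun b => u (i, b)) :=
    fun u => chi_sum _ _
  simp only [h2]
  have h3 : ∑ u : Fin g × Bool → ZMod 2, ∏ i : Fin g, F i (fun b => u (i, b))
      = ∑ c : Fin g → Bool → ZMod 2, ∏ i : Fin g, F i (c i) := by
    refine Fintype.sum_equiv (Equiv.curry (Fin g) Bool (ZMod 2)) _ _ fun u => ?_
    rfl
  rw [h3, ← Fintype.piFinset_univ, Finset.sum_prod_piFinset]
  have h4 : ∀ i : Fin g, ∑ w : Bool → ZMod 2, F i w = 2 * chi (a (i, false) * a (i, true)) :=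
    fun i => gauss_local _ _
  calc ∏ i : Fin g, ∑ w ∈ Finset.univ, F i w
      = ∏ i : Fin g, (2 * chi (a (i, false) * a (i, true))) := by
        exact Finset.prod_congr rfl fun i _ => h4 i
    _ = 2 ^ g * ∏ i : Fin g, chi (a (i, false) * a (i, true)) := by
        rw [Finset.prod_mul_distrib, Finset.prod_const, Finset.card_univ, Fintype.card_fin]
    _ = 2 ^ g * chi (arf2 a) := by rw [arf2, chi_sum]

/-- the backward direction: Arf is invariant. -/
lemma backward {q q' : (Fin g × Bool → ℤ) → ZMod 2} (hq : IsQuadRef g q)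
    (hq' : IsQuadRef g q') (φ : (Fin g × Bool → ℤ) ≃ₗ[ℤ] (Fin g × Bool → ℤ))
    (h : q' = q ∘ ⇑φ) : arf g q = arf g q' := by
  set a : Fin g × Bool → ZMod 2 := bv q with ha
  have hqf := quadRef_formula hq
  have key : ∑ u : Fin g × Bool → ZMod 2, chi (q' (liftZ u))
      = ∑ u : Fin g × Bool → ZMod 2, chi (q (liftZ u)) := by
    have h1 : ∀ u : Fin g × Bool → ZMod 2, q' (liftZ u) = q2 a (redEquiv φ u) := by
      intro u
      rw [h]
      show q (φ (liftZ u)) = _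
      rw [hqf]
      rfl
    have h2 : ∀ u : Fin g × Bool → ZMod 2, q (liftZ u) = q2 a u := by
      intro u
      rw [hqf]
      show q2 (bv q) (red (liftZ u)) = q2 a u
      rw [red_lift]
    simp only [h1, h2]
    exact Equiv.sum_comp (redEquiv φ) fun y => chi (q2 a y)
  rw [gauss_sum_eq hq, gauss_sum_eq hq'] at key
  have h2g : (2 : ℤ) ^ g ≠ 0 := pow_ne_zero g two_ne_zero
  have := mul_left_cancel₀ h2g key
  rw [arf_eq_arf2, arf_eq_arf2]
  exact (chi_inj this).symm

end StmtFive

/-- for `g ≥ 1`, the action of `Sp_{2g}(ℤ)` on quadratic refinements of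
`(ℤ^{2g}, Ω_g)` by precomposition has exactly two orbits, distinguished by the Arf
invariant: `Arf(q) = Arf(q')` iff `q' = q ∘ φ` for some symplectic `φ`. -/
theorem stmt_5 (g : ℕ) (hg : 1 ≤ g) (q q' : (Fin g × Bool → ℤ) → ZMod 2)
    (hq : IsQuadRef g q) (hq' : IsQuadRef g q') :
    arf g q = arf g q' ↔
      ∃ φ : (Fin g × Bool → ℤ) ≃ₗ[ℤ] (Fin g × Bool → ℤ), IsSymp g φ ∧ q' = q ∘ ⇑φ := by
  constructor
  · exact fun h => StmtFive.forward hq hq' h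
  · rintro ⟨φ, hφ, h⟩
    exact StmtFive.backward hq hq' φ h
end

section
/- Let G = ⟨a, b | aba = bab⟩ and let H ≤ G be the stabilizer of the point 1 under the homomorphism G → S_3 sending a ↦ (1 2) and b ↦ (1 3). Then H has index 3 in G, is generated by a^{-2}, b^{-2}, and aba^{-1}, and its abelianization is free abelian of rank 2, generated by the images of a^{-2} and aba^{-1}, with a^{-2} and b^{-2} having the same image in the abelianization. -/
/-- The braid relation `aba(bab)⁻¹` defining `Γ_{1,1} = ⟨a, b | aba = bab⟩`,
with `a = of true` and `b = of false`. -/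
def braidRel : Set (FreeGroup Bool) :=
  {FreeGroup.of true * FreeGroup.of false * FreeGroup.of true *
    (FreeGroup.of false * FreeGroup.of true * FreeGroup.of false)⁻¹}

/-- `G = ⟨a, b | aba = bab⟩`. -/
abbrev G7 : Type := PresentedGroup braidRel

/-- The generator `a`. -/
def ga : G7 := PresentedGroup.of true

/-- The generator `b`. -/
def gb : G7 := PresentedGroup.of false

namespace Stmt7Aux

open Equiv Multiplicative

abbrev M : Type := Multiplicative (ℤ × ℤ)

/-- The action of `Perm (Fin 3)` on `Fin 3 → M` by permuting coordinates. -/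
def permAut : Equiv.Perm (Fin 3) →* MulAut (Fin 3 → M) where
  toFun σ :=
    { toFun := fun v i => v (σ⁻¹ i)
      invFun := fun v i => v (σ i)
      left_inv := fun v => by funext i; simp
      right_inv := fun v => by funext i; simp
      map_mul' := fun v w => rfl }
  map_one' := by
    refine MulEquiv.ext fun v => ?_
    funext i; simp
  map_mul' σ τ := by
    refine MulEquiv.ext fun v => ?_
    funext i
    show v ((σ * τ)⁻¹ i) = v (τ⁻¹ (σ⁻¹ i))
    rw [mul_inv_rev, Equiv.Perm.mul_apply]

abbrev W : Type := SemidirectProduct (Fin 3 → M) (Equiv.Perm (Fin 3)) permAut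

def Va : Fin 3 → M := ![1, ofAdd (-1, 0), ofAdd (0, 1)]

def Vb : Fin 3 → M := ![1, ofAdd (0, 1), ofAdd (-1, 0)]

def wA : W := ⟨Va, Equiv.swap 0 1⟩

def wB : W := ⟨Vb, Equiv.swap 0 2⟩

lemma W_ext {x y : W} (h1 : ∀ i, x.left i = y.left i) (h2 : ∀ i, x.right i = y.right i) :
    x = y :=
  SemidirectProduct.ext (funext h1) (Equiv.ext h2)

lemma braid_w : wA * wB * wA * (wB * wA * wB)⁻¹ = 1 :=
  W_ext (by decide) (by decide)

/-- The induced-representation homomorphism `G7 →* W`. -/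
noncomputable def Θ : G7 →* W :=
  PresentedGroup.toGroup (f := fun x => cond x wA wB) (by
    rintro r hr
    rcases hr with rfl
    simp only [map_mul, map_inv, FreeGroup.lift_apply_of, cond]
    exact braid_w)

lemma Θ_a : Θ ga = wA := PresentedGroup.toGroup.of _

lemma Θ_b : Θ gb = wB := PresentedGroup.toGroup.of _

lemma braid_g : ga * gb * ga = gb * ga * gb := by
  have h : PresentedGroup.mk braidRel
      (FreeGroup.of true * FreeGroup.of false * FreeGroup.of true *
        (FreeGroup.of false * FreeGroup.of true * FreeGroup.of false)⁻¹) = 1 := by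
    apply (QuotientGroup.eq_one_iff _).mpr
    exact Subgroup.subset_normalClosure rfl
  rw [map_mul, map_mul, map_inv, map_mul, map_mul] at h
  exact mul_inv_eq_one.mp h

instance : MulAction.IsPretransitive (Equiv.Perm (Fin 3)) (Fin 3) :=
  ⟨fun x y => ⟨Equiv.swap x y, by
    rw [Equiv.Perm.smul_def]; exact Equiv.swap_apply_left x y⟩⟩

lemma theta_sA : (Θ (ga⁻¹ ^ 2)).left 0 = ofAdd ((1, 0) : ℤ × ℤ) := by
  have h : Θ (ga⁻¹ ^ 2) = wA⁻¹ * wA⁻¹ := by rw [map_pow, map_inv, Θ_a, sq]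
  rw [h]; decide

lemma theta_sB : (Θ (gb⁻¹ ^ 2)).left 0 = ofAdd ((1, 0) : ℤ × ℤ) := by
  have h : Θ (gb⁻¹ ^ 2) = wB⁻¹ * wB⁻¹ := by rw [map_pow, map_inv, Θ_b, sq]
  rw [h]; decide

lemma theta_sC : (Θ (ga * gb * ga⁻¹)).left 0 = ofAdd ((0, 1) : ℤ × ℤ) := by
  have h : Θ (ga * gb * ga⁻¹) = wA * wB * wA⁻¹ := by
    rw [map_mul, map_mul, map_inv, Θ_a, Θ_b]
  rw [h]; decide

end Stmt7Aux

/-- for the homomorphism `G → S_3` with `a ↦ (1 2)`, `b ↦ (1 3)` (points of `S_3`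
labelled by `Fin 3`), the preimage `H` of the stabilizer of the first point has index 3, is
generated by `a⁻²`, `b⁻²` and `aba⁻¹`, and its abelianization is free abelian of rank 2,
generated by the classes of `a⁻²` and `aba⁻¹`, with `b⁻²` and `a⁻²` having the same class. -/
theorem stmt_7 (φ : G7 →* Equiv.Perm (Fin 3))
    (hφa : φ ga = Equiv.swap 0 1) (hφb : φ gb = Equiv.swap 0 2)
    (H : Subgroup G7)
    (hH : H = Subgroup.comap φ (MulAction.stabilizer (Equiv.Perm (Fin 3)) (0 : Fin 3))) :
    H.index = 3 ∧
    H = Subgroup.closure {ga⁻¹ ^ 2, gb⁻¹ ^ 2, ga * gb * ga⁻¹} ∧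
    ∃ (e : Abelianization ↥H ≃* Multiplicative (ℤ × ℤ))
      (h1 : ga⁻¹ ^ 2 ∈ H) (h2 : gb⁻¹ ^ 2 ∈ H) (h3 : ga * gb * ga⁻¹ ∈ H),
      e (Abelianization.of ⟨ga⁻¹ ^ 2, h1⟩) = Multiplicative.ofAdd ((1, 0) : ℤ × ℤ) ∧
      e (Abelianization.of ⟨ga * gb * ga⁻¹, h3⟩) = Multiplicative.ofAdd ((0, 1) : ℤ × ℤ) ∧
      Abelianization.of (⟨gb⁻¹ ^ 2, h2⟩ : H) = Abelianization.of (⟨ga⁻¹ ^ 2, h1⟩ : H) := by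
  classical
  open Stmt7Aux Multiplicative in
  have main : True := trivial
  have hstab : ∀ g : G7, g ∈ H ↔ φ g 0 = 0 := by
    intro g
    rw [hH, Subgroup.mem_comap, MulAction.mem_stabilizer_iff]
    exact Iff.rfl
  -- φ-values of the three generators of K
  have hφsA : φ (ga⁻¹ ^ 2) = 1 := by
    rw [map_pow, map_inv, hφa, Equiv.swap_inv, sq, Equiv.swap_mul_self]
  have hφsB : φ (gb⁻¹ ^ 2) = 1 := by
    rw [map_pow, map_inv, hφb, Equiv.swap_inv, sq, Equiv.swap_mul_self]
  have hφsC : φ (ga * gb * ga⁻¹) = Equiv.swap 1 2 := by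
    rw [map_mul, map_mul, map_inv, hφa, hφb, Equiv.swap_inv]
    ext i
    fin_cases i <;> rfl
  have hm1 : ga⁻¹ ^ 2 ∈ H := (hstab _).mpr (by rw [hφsA]; rfl)
  have hm2 : gb⁻¹ ^ 2 ∈ H := (hstab _).mpr (by rw [hφsB]; rfl)
  have hm3 : ga * gb * ga⁻¹ ∈ H := (hstab _).mpr (by rw [hφsC]; rfl)
  set K : Subgroup G7 := Subgroup.closure {ga⁻¹ ^ 2, gb⁻¹ ^ 2, ga * gb * ga⁻¹} with hKdef
  have hmem1 : ga⁻¹ ^ 2 ∈ K := Subgroup.subset_closure (by simp)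
  have hmem2 : gb⁻¹ ^ 2 ∈ K := Subgroup.subset_closure (by simp)
  have hmem3 : ga * gb * ga⁻¹ ∈ K := Subgroup.subset_closure (by simp)
  have ha2 : ga ^ 2 ∈ K := by
    have h : ga ^ 2 = (ga⁻¹ ^ 2)⁻¹ := by group
    rw [h]; exact inv_mem hmem1
  have hb2 : gb ^ 2 ∈ K := by
    have h : gb ^ 2 = (gb⁻¹ ^ 2)⁻¹ := by group
    rw [h]; exact inv_mem hmem2
  -- the conjugate b a b⁻¹ in terms of the generators
  have hw : gb * ga * gb⁻¹ = (ga * gb * ga⁻¹) * (ga⁻¹ ^ 2)⁻¹ * gb⁻¹ ^ 2 := by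
    have h1 : (ga * gb * ga⁻¹) * (ga⁻¹ ^ 2)⁻¹ * gb⁻¹ ^ 2
        = ga * gb * ga * gb⁻¹ * gb⁻¹ := by group
    have h2 : gb * ga * gb⁻¹ = gb * ga * gb * gb⁻¹ * gb⁻¹ := by group
    rw [h1, h2, braid_g]
  have hwK : gb * ga * gb⁻¹ ∈ K := by
    rw [hw]; exact mul_mem (mul_mem hmem3 (inv_mem hmem1)) hmem2
  have hKH : K ≤ H := by
    apply (Subgroup.closure_le _).mpr
    rintro x hx
    simp only [Set.mem_insert_iff, Set.mem_singleton_iff] at hx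
    rcases hx with rfl | rfl | rfl
    · exact hm1
    · exact hm2
    · exact hm3
  -- coset trichotomy
  have htri : ∀ g : G7, g ∈ K ∨ g * ga⁻¹ ∈ K ∨ g * gb⁻¹ ∈ K := by
    intro g
    have hg : g ∈ Subgroup.closure (Set.range (PresentedGroup.of (rels := braidRel))) := by
      rw [PresentedGroup.closure_range_of]; trivial
    refine Subgroup.closure_induction_right
      (p := fun x _ => x ∈ K ∨ x * ga⁻¹ ∈ K ∨ x * gb⁻¹ ∈ K) ?_ ?_ ?_ hg
    · exact Or.inl (one_mem K)
    · rintro x hx y ⟨c, rfl⟩ ih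
      cases c
      · -- y = gb
        show x * gb ∈ K ∨ x * gb * ga⁻¹ ∈ K ∨ x * gb * gb⁻¹ ∈ K
        rcases ih with h | h | h
        · right; right
          have he : x * gb * gb⁻¹ = x := by group
          rw [he]; exact h
        · right; left
          have he : x * gb * ga⁻¹ = (x * ga⁻¹) * (ga * gb * ga⁻¹) := by group
          rw [he]; exact mul_mem h hmem3
        · left
          have he : x * gb = (x * gb⁻¹) * gb ^ 2 := by group
          rw [he]; exact mul_mem h hb2
      · -- y = ga
        show x * ga ∈ K ∨ x * ga * ga⁻¹ ∈ K ∨ x * ga * gb⁻¹ ∈ K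
        rcases ih with h | h | h
        · right; left
          have he : x * ga * ga⁻¹ = x := by group
          rw [he]; exact h
        · left
          have he : x * ga = (x * ga⁻¹) * ga ^ 2 := by group
          rw [he]; exact mul_mem h ha2
        · right; right
          have he : x * ga * gb⁻¹ = (x * gb⁻¹) * (gb * ga * gb⁻¹) := by group
          rw [he]; exact mul_mem h hwK
    · rintro x hx y ⟨c, rfl⟩ ih
      cases c
      · -- y = gb, target x * gb⁻¹
        show x * gb⁻¹ ∈ K ∨ x * gb⁻¹ * ga⁻¹ ∈ K ∨ x * gb⁻¹ * gb⁻¹ ∈ K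
        rcases ih with h | h | h
        · right; right
          have he : x * gb⁻¹ * gb⁻¹ = x * gb⁻¹ ^ 2 := by group
          rw [he]; exact mul_mem h hmem2
        · right; left
          have he : x * gb⁻¹ * ga⁻¹ = (x * ga⁻¹) * (ga * gb * ga⁻¹)⁻¹ := by group
          rw [he]; exact mul_mem h (inv_mem hmem3)
        · left
          have he : x * gb⁻¹ = (x * gb⁻¹) * 1 := by group
          exact h
      · -- y = ga, target x * ga⁻¹
        show x * ga⁻¹ ∈ K ∨ x * ga⁻¹ * ga⁻¹ ∈ K ∨ x * ga⁻¹ * gb⁻¹ ∈ K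
        rcases ih with h | h | h
        · right; left
          have he : x * ga⁻¹ * ga⁻¹ = x * ga⁻¹ ^ 2 := by group
          rw [he]; exact mul_mem h hmem1
        · left
          exact h
        · right; right
          have he : x * ga⁻¹ * gb⁻¹ = (x * gb⁻¹) * (gb * ga * gb⁻¹)⁻¹ := by group
          rw [he]; exact mul_mem h (inv_mem hwK)
  -- H = K
  have hHK : H = K := by
    apply le_antisymm _ hKH
    intro g hgH
    rcases htri g with h | h | h
    · exact h
    · exfalso
      have h2 : g * ga⁻¹ ∈ H := hKH h
      have h3 : g⁻¹ * (g * ga⁻¹) ∈ H := H.mul_mem (H.inv_mem hgH) h2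
      have he : g⁻¹ * (g * ga⁻¹) = ga⁻¹ := by group
      rw [he] at h3
      have h4 : ga ∈ H := (Subgroup.inv_mem_iff H).mp h3
      rw [hstab, hφa] at h4
      exact absurd h4 (by decide)
    · exfalso
      have h2 : g * gb⁻¹ ∈ H := hKH h
      have h3 : g⁻¹ * (g * gb⁻¹) ∈ H := H.mul_mem (H.inv_mem hgH) h2
      have he : g⁻¹ * (g * gb⁻¹) = gb⁻¹ := by group
      rw [he] at h3
      have h4 : gb ∈ H := (Subgroup.inv_mem_iff H).mp h3
      rw [hstab, hφb] at h4
      exact absurd h4 (by decide)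
  -- surjectivity of φ and the index
  have hswap : ∀ x y : Fin 3, Equiv.swap x y ∈ φ.range := by
    intro x y
    fin_cases x <;> fin_cases y
    · exact ⟨1, by rw [map_one]; ext i; fin_cases i <;> rfl⟩
    · exact ⟨ga, by rw [hφa]; ext i; fin_cases i <;> rfl⟩
    · exact ⟨gb, by rw [hφb]; ext i; fin_cases i <;> rfl⟩
    · exact ⟨ga, by rw [hφa]; ext i; fin_cases i <;> rfl⟩
    · exact ⟨1, by rw [map_one]; ext i; fin_cases i <;> rfl⟩
    · exact ⟨ga * gb * ga⁻¹, by rw [hφsC]; ext i; fin_cases i <;> rfl⟩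
    · exact ⟨gb, by rw [hφb]; ext i; fin_cases i <;> rfl⟩
    · exact ⟨ga * gb * ga⁻¹, by rw [hφsC]; ext i; fin_cases i <;> rfl⟩
    · exact ⟨1, by rw [map_one]; ext i; fin_cases i <;> rfl⟩
  have hsurj : Function.Surjective φ := by
    intro σ
    refine Equiv.Perm.swap_induction_on σ ⟨1, map_one φ⟩ ?_
    rintro f x y hxy ⟨g, rfl⟩
    obtain ⟨k, hk⟩ := hswap x y
    exact ⟨k * g, by rw [map_mul, hk]⟩
  have hidx : H.index = 3 := by
    rw [hH, Subgroup.index_comap_of_surjective _ hsurj,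
      MulAction.index_stabilizer_of_transitive, Nat.card_eq_fintype_card, Fintype.card_fin]
  refine ⟨hidx, hHK, ?_⟩
  -- Part 3: the abelianization
  have hπ : ∀ g : G7, (Stmt7Aux.Θ g).right = φ g := by
    have h : SemidirectProduct.rightHom.comp Stmt7Aux.Θ = φ := by
      refine PresentedGroup.ext fun x => ?_
      cases x
      · show (Stmt7Aux.Θ gb).right = φ gb
        rw [Stmt7Aux.Θ_b, hφb]; rfl
      · show (Stmt7Aux.Θ ga).right = φ ga
        rw [Stmt7Aux.Θ_a, hφa]; rfl
    intro g
    exact DFunLike.congr_fun h g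
  have hfix : ∀ h : ↥H, ((Stmt7Aux.Θ (h : G7)).right)⁻¹ 0 = 0 := by
    intro h
    have h0 : φ (h : G7) 0 = 0 := (hstab _).mp h.2
    rw [hπ]
    conv_lhs => rw [← h0]
    exact Equiv.symm_apply_apply (φ (h : G7)) 0
  let θ : ↥H →* Multiplicative (ℤ × ℤ) := MonoidHom.mk' (fun h => (Stmt7Aux.Θ (h : G7)).left 0)
    (fun x y => by
      show (Stmt7Aux.Θ ((x : G7) * (y : G7))).left 0 = _
      rw [map_mul, SemidirectProduct.mul_left, Pi.mul_apply]
      congr 1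
      show (Stmt7Aux.Θ (y : G7)).left (((Stmt7Aux.Θ (x : G7)).right)⁻¹ 0)
        = (Stmt7Aux.Θ (y : G7)).left 0
      rw [hfix x])
  set x1' : ↥H := ⟨ga⁻¹ ^ 2, hm1⟩ with hx1'
  set x2' : ↥H := ⟨ga * gb * ga⁻¹, hm3⟩ with hx2'
  have vA : θ x1' = Multiplicative.ofAdd ((1, 0) : ℤ × ℤ) := Stmt7Aux.theta_sA
  have vB : θ ⟨gb⁻¹ ^ 2, hm2⟩ = Multiplicative.ofAdd ((1, 0) : ℤ × ℤ) := Stmt7Aux.theta_sB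
  have vC : θ x2' = Multiplicative.ofAdd ((0, 1) : ℤ × ℤ) := Stmt7Aux.theta_sC
  let σ0 : Multiplicative (ℤ × ℤ) →* Abelianization ↥H := MonoidHom.mk'
    (fun p => Abelianization.of x1' ^ (Multiplicative.toAdd p).1 *
      Abelianization.of x2' ^ (Multiplicative.toAdd p).2)
    (fun p q => by
      show Abelianization.of x1' ^ (Multiplicative.toAdd p + Multiplicative.toAdd q).1 *
          Abelianization.of x2' ^ (Multiplicative.toAdd p + Multiplicative.toAdd q).2 = _
      rw [Prod.fst_add, Prod.snd_add, zpow_add, zpow_add, mul_mul_mul_comm])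
  -- the two squares have the same class in the abelianization
  have hBA : Abelianization.of (⟨gb⁻¹ ^ 2, hm2⟩ : ↥H) = Abelianization.of x1' := by
    set α : ↥H := ⟨ga ^ 2, hKH ha2⟩ with hα
    set δ : ↥H := ⟨gb ^ 2, hKH hb2⟩ with hδ
    set γ : ↥H := ⟨gb * ga * gb⁻¹, hKH hwK⟩ with hγ
    have e1 : x2' * α = γ * δ := Subtype.ext (by
      show (ga * gb * ga⁻¹) * ga ^ 2 = (gb * ga * gb⁻¹) * gb ^ 2
      have p1 : (ga * gb * ga⁻¹) * ga ^ 2 = ga * gb * ga := by group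
      have p2 : (gb * ga * gb⁻¹) * gb ^ 2 = gb * ga * gb := by group
      rw [p1, p2, Stmt7Aux.braid_g])
    have e2 : γ = α⁻¹ * x2' * α := Subtype.ext (by
      show gb * ga * gb⁻¹ = (ga ^ 2)⁻¹ * (ga * gb * ga⁻¹) * ga ^ 2
      have p1 : (ga ^ 2)⁻¹ * (ga * gb * ga⁻¹) * ga ^ 2 = ga⁻¹ * gb * ga := by group
      have p2 : gb * ga * gb⁻¹ = ga⁻¹ * (ga * gb * ga) * gb⁻¹ := by group
      rw [p1, p2, Stmt7Aux.braid_g]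
      group)
    have c2 : Abelianization.of γ = Abelianization.of x2' := by
      rw [e2, map_mul, map_mul, map_inv,
        mul_comm ((Abelianization.of α)⁻¹) (Abelianization.of x2'), mul_assoc,
        inv_mul_cancel, mul_one]
    have c1 : Abelianization.of x2' * Abelianization.of α
        = Abelianization.of x2' * Abelianization.of δ := by
      rw [← map_mul, e1, map_mul, c2]
    have c3 : Abelianization.of α = Abelianization.of δ := mul_left_cancel c1
    have d1 : (⟨gb⁻¹ ^ 2, hm2⟩ : ↥H) = δ⁻¹ := Subtype.ext (by
      show gb⁻¹ ^ 2 = (gb ^ 2)⁻¹; group)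
    have d2 : x1' = α⁻¹ := Subtype.ext (by
      show ga⁻¹ ^ 2 = (ga ^ 2)⁻¹; group)
    rw [d1, d2, map_inv, map_inv, c3]
  have claimA : ∀ h : ↥H, σ0 (θ h) = Abelianization.of h := by
    intro h
    have hx : (h : G7) ∈ Subgroup.closure {ga⁻¹ ^ 2, gb⁻¹ ^ 2, ga * gb * ga⁻¹} := hHK ▸ h.2
    have key : ∀ hz' : (h : G7) ∈ H, σ0 (θ ⟨(h : G7), hz'⟩) = Abelianization.of ⟨(h : G7), hz'⟩ := by
      refine Subgroup.closure_induction
        (p := fun z _ => ∀ hz' : z ∈ H, σ0 (θ ⟨z, hz'⟩) = Abelianization.of ⟨z, hz'⟩)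
        ?_ ?_ ?_ ?_ hx
      · rintro x hx'
        simp only [Set.mem_insert_iff, Set.mem_singleton_iff] at hx'
        rcases hx' with rfl | rfl | rfl <;> intro hz'
        · have hv : θ ⟨ga⁻¹ ^ 2, hz'⟩ = Multiplicative.ofAdd ((1, 0) : ℤ × ℤ) := vA
          rw [hv]
          show Abelianization.of x1' ^ (1 : ℤ) * Abelianization.of x2' ^ (0 : ℤ) = _
          rw [zpow_one, zpow_zero, mul_one]
        · have hv : θ ⟨gb⁻¹ ^ 2, hz'⟩ = Multiplicative.ofAdd ((1, 0) : ℤ × ℤ) := vB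
          rw [hv]
          show Abelianization.of x1' ^ (1 : ℤ) * Abelianization.of x2' ^ (0 : ℤ) = _
          rw [zpow_one, zpow_zero, mul_one]
          exact hBA.symm
        · have hv : θ ⟨ga * gb * ga⁻¹, hz'⟩ = Multiplicative.ofAdd ((0, 1) : ℤ × ℤ) := vC
          rw [hv]
          show Abelianization.of x1' ^ (0 : ℤ) * Abelianization.of x2' ^ (1 : ℤ) = _
          rw [zpow_one, zpow_zero, one_mul]
      · intro hz'
        have h1' : (⟨(1 : G7), hz'⟩ : ↥H) = 1 := rfl
        rw [h1', map_one, map_one, map_one]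
      · intro x y hxK hyK ihx ihy hz'
        have hxH : x ∈ H := hKH (hKdef ▸ hxK)
        have hyH : y ∈ H := hKH (hKdef ▸ hyK)
        have hsplit : (⟨x * y, hz'⟩ : ↥H) = ⟨x, hxH⟩ * ⟨y, hyH⟩ := rfl
        rw [hsplit, map_mul, map_mul, ihx hxH, ihy hyH, map_mul]
      · intro x hxK ihx hz'
        have hxH : x ∈ H := hKH (hKdef ▸ hxK)
        have hsplit : (⟨x⁻¹, hz'⟩ : ↥H) = (⟨x, hxH⟩)⁻¹ := rfl
        rw [hsplit, map_inv, map_inv, ihx hxH, map_inv]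
    have heta : (⟨(h : G7), h.2⟩ : ↥H) = h := rfl
    rw [← heta]
    exact key h.2
  have claimB : ∀ p, Abelianization.lift θ (σ0 p) = p := by
    intro p
    show Abelianization.lift θ (Abelianization.of x1' ^ (Multiplicative.toAdd p).1 *
      Abelianization.of x2' ^ (Multiplicative.toAdd p).2) = p
    rw [map_mul, map_zpow, map_zpow, Abelianization.lift_apply_of, Abelianization.lift_apply_of, vA, vC,
      ← ofAdd_zsmul, ← ofAdd_zsmul, ← ofAdd_add]
    conv_rhs => rw [← ofAdd_toAdd p]
    congr 1
    simp [Prod.ext_iff]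
  have h₁ : σ0.comp (Abelianization.lift θ) = MonoidHom.id (Abelianization ↥H) := by
    apply Abelianization.hom_ext
    refine MonoidHom.ext fun h => ?_
    show σ0 (Abelianization.lift θ (Abelianization.of h)) = Abelianization.of h
    rw [Abelianization.lift_apply_of]
    exact claimA h
  have h₂ : (Abelianization.lift θ).comp σ0 = MonoidHom.id (Multiplicative (ℤ × ℤ)) :=
    MonoidHom.ext claimB
  refine ⟨MonoidHom.toMulEquiv (Abelianization.lift θ) σ0 h₁ h₂, hm1, hm2, hm3, ?_, ?_, hBA⟩
  · show Abelianization.lift θ (Abelianization.of x1') = _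
    rw [Abelianization.lift_apply_of]
    exact vA
  · show Abelianization.lift θ (Abelianization.of x2') = _
    rw [Abelianization.lift_apply_of]
    exact vC
end

section
/- The abelianization of SL_2(Z) is cyclic of order 12, generated by the image of the matrix [[1,1],[0,1]]. -/
open Matrix ModularGroup

namespace Stmt9

theorem closure_ST :
    Subgroup.closure ({S, T} : Set (Matrix.SpecialLinearGroup (Fin 2) ℤ)) = ⊤ := by
  rw [eq_top_iff]
  set H := Subgroup.closure ({S, T} : Set (Matrix.SpecialLinearGroup (Fin 2) ℤ)) with hH
  have hS : S ∈ H := Subgroup.subset_closure (Set.mem_insert _ _)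
  have hT : T ∈ H := Subgroup.subset_closure (by simp)
  suffices Hk : ∀ k : ℕ, ∀ g : Matrix.SpecialLinearGroup (Fin 2) ℤ,
      (g.1 1 0).natAbs ≤ k → g ∈ H by
    exact fun g _ => Hk (g.1 1 0).natAbs g le_rfl
  intro k
  induction k with
  | zero =>
    intro g hg
    have hc : g.1 1 0 = 0 := by omega
    have hdet : g.1 0 0 * g.1 1 1 = 1 := by
      have h2 := g.2
      rw [Matrix.det_fin_two] at h2
      rw [hc] at h2; linarith
    rcases Int.eq_one_or_neg_one_of_mul_eq_one' hdet with ⟨ha, hd⟩ | ⟨ha, hd⟩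
    · have hgT : g = T ^ (g.1 0 1) := by
        apply Subtype.ext
        rw [coe_T_zpow]
        ext i j
        fin_cases i <;> fin_cases j <;> simp [ha, hd, hc]
      rw [hgT]; exact zpow_mem hT _
    · have hgT : g = S ^ 2 * T ^ (-(g.1 0 1)) := by
        apply Subtype.ext
        have h2 : ((S ^ 2 : Matrix.SpecialLinearGroup (Fin 2) ℤ) :
            Matrix (Fin 2) (Fin 2) ℤ) = -1 := by
          rw [pow_two, Matrix.SpecialLinearGroup.coe_mul, S_mul_S_eq]
        rw [Matrix.SpecialLinearGroup.coe_mul, h2, coe_T_zpow, neg_one_mul]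
        ext i j
        fin_cases i <;> fin_cases j <;> simp [ha, hd, hc]
      rw [hgT]; exact mul_mem (pow_mem hS 2) (zpow_mem hT _)
  | succ n ih =>
    intro g hg
    by_cases h0 : (g.1 1 0).natAbs ≤ n
    · exact ih g h0
    · have hc0 : g.1 1 0 ≠ 0 := fun h => h0 (by simp [h])
      have hentry : ((S * T ^ (-(g.1 0 0 / g.1 1 0)) * g).1) 1 0 = g.1 0 0 % g.1 1 0 := by
        have h1 : ((S * T ^ (-(g.1 0 0 / g.1 1 0)) * g).1)
            = S.1 * (!![1, -(g.1 0 0 / g.1 1 0); 0, 1] * g.1) := by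
          rw [Matrix.SpecialLinearGroup.coe_mul, Matrix.SpecialLinearGroup.coe_mul,
            coe_T_zpow, Matrix.mul_assoc]
        rw [h1, Int.emod_def]
        simp [coe_S, Matrix.mul_apply, Matrix.vecMul, dotProduct, Fin.sum_univ_two]
        ring
      have hlt : ((S * T ^ (-(g.1 0 0 / g.1 1 0)) * g).1 1 0).natAbs ≤ n := by
        rw [hentry]
        have h1 : 0 ≤ g.1 0 0 % g.1 1 0 := Int.emod_nonneg _ hc0
        have h2 : g.1 0 0 % g.1 1 0 < |g.1 1 0| := Int.emod_lt_abs _ hc0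
        rw [Int.abs_eq_natAbs] at h2
        omega
      have hmem := ih _ hlt
      have hgiv : g = (S * T ^ (-(g.1 0 0 / g.1 1 0)))⁻¹ *
          (S * T ^ (-(g.1 0 0 / g.1 1 0)) * g) := by group
      rw [hgiv]
      exact mul_mem (inv_mem (mul_mem hS (zpow_mem hT _))) hmem

/-! ### Finite quotient data -/

def tup3 (g : Matrix.SpecialLinearGroup (Fin 2) (ZMod 3)) :
    ZMod 3 × ZMod 3 × ZMod 3 × ZMod 3 := (g.1 0 0, g.1 0 1, g.1 1 0, g.1 1 1)

def tup4 (g : Matrix.SpecialLinearGroup (Fin 2) (ZMod 4)) :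
    ZMod 4 × ZMod 4 × ZMod 4 × ZMod 4 := (g.1 0 0, g.1 0 1, g.1 1 0, g.1 1 1)

def inK3 (g : Matrix.SpecialLinearGroup (Fin 2) (ZMod 3)) : Bool :=
  tup3 g ∈ [((0:ZMod 3),(1:ZMod 3),(2:ZMod 3),(0:ZMod 3)), (0,2,1,0), (1,0,0,1), (1,1,1,2),
    (1,2,2,2), (2,0,0,2), (2,1,1,1), (2,2,2,1)]

def inK4 (g : Matrix.SpecialLinearGroup (Fin 2) (ZMod 4)) : Bool :=
  tup4 g ∈ [((0:ZMod 4),(1:ZMod 4),(3:ZMod 4),(3:ZMod 4)), (0,3,1,3), (1,0,0,1), (1,1,1,2),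
    (1,2,2,1), (1,3,3,2), (2,1,1,1), (2,3,3,1), (3,0,2,3), (3,1,3,0), (3,2,0,3), (3,3,1,0)]

def t3i : Matrix.SpecialLinearGroup (Fin 2) (ZMod 3) := ⟨!![1,2;0,1], by decide⟩
def t4i : Matrix.SpecialLinearGroup (Fin 2) (ZMod 4) := ⟨!![1,3;0,1], by decide⟩

def f3 (g : Matrix.SpecialLinearGroup (Fin 2) (ZMod 3)) : ZMod 3 :=
  if inK3 g then 0 else if inK3 (g * t3i) then 1 else 2

def f4 (g : Matrix.SpecialLinearGroup (Fin 2) (ZMod 4)) : ZMod 4 :=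
  if inK4 g then 0 else if inK4 (g * t4i) then 1
  else if inK4 (g * t4i * t4i) then 2 else 3

def pi3 : Matrix.SpecialLinearGroup (Fin 2) ℤ →* Matrix.SpecialLinearGroup (Fin 2) (ZMod 3) :=
  Matrix.SpecialLinearGroup.map (Int.castRingHom (ZMod 3))

def pi4 : Matrix.SpecialLinearGroup (Fin 2) ℤ →* Matrix.SpecialLinearGroup (Fin 2) (ZMod 4) :=
  Matrix.SpecialLinearGroup.map (Int.castRingHom (ZMod 4))

theorem d1 : ∀ h, f3 (h * pi3 S) = f3 h + f3 (pi3 S) := by decide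
theorem d2 : ∀ h, f3 (h * pi3 T) = f3 h + f3 (pi3 T) := by decide
theorem d3 : ∀ h, f4 (h * pi4 S) = f4 h + f4 (pi4 S) := by decide
theorem d4 : ∀ h, f4 (h * pi4 T) = f4 h + f4 (pi4 T) := by decide
theorem dT3 : f3 (pi3 T) = 1 := by decide
theorem dT4 : f4 (pi4 T) = 1 := by decide
theorem d13 : f3 1 = 0 := by decide
theorem d14 : f4 1 = 0 := by decide

/-! ### The homomorphism to `ZMod 3 × ZMod 4` -/

def F (g : Matrix.SpecialLinearGroup (Fin 2) ℤ) : ZMod 3 × ZMod 4 :=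
  (f3 (pi3 g), f4 (pi4 g))

theorem F_one : F 1 = 0 := by
  simp only [F, _root_.map_one, d13, d14]; rfl

theorem F_mul_S : ∀ a, F (a * S) = F a + F S := fun a => by
  simp only [F, _root_.map_mul, Prod.mk_add_mk, d1, d3]

theorem F_mul_T : ∀ a, F (a * T) = F a + F T := fun a => by
  simp only [F, _root_.map_mul, Prod.mk_add_mk, d2, d4]

def Hset : Subgroup (Matrix.SpecialLinearGroup (Fin 2) ℤ) where
  carrier := {b | ∀ a, F (a * b) = F a + F b}
  one_mem' := fun a => by rw [mul_one, F_one, add_zero]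
  mul_mem' := by
    intro b c hb hc a
    rw [← mul_assoc, hc, hb, hc, add_assoc]
  inv_mem' := by
    intro b hb a
    have hbinv : F b⁻¹ = - F b := by
      have h2 := hb b⁻¹
      rw [inv_mul_cancel, F_one] at h2
      exact eq_neg_of_add_eq_zero_left h2.symm
    have h1 := hb (a * b⁻¹)
    rw [inv_mul_cancel_right] at h1
    rw [hbinv, ← sub_eq_add_neg]
    exact eq_sub_of_add_eq h1.symm

theorem F_mul : ∀ a b, F (a * b) = F a + F b := by
  have htop : Hset = ⊤ := by
    rw [eq_top_iff, ← closure_ST]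
    apply Subgroup.closure_le Hset |>.2
    rintro x (rfl | rfl)
    · exact F_mul_S
    · exact F_mul_T
  intro a b
  exact (htop ▸ Subgroup.mem_top b : b ∈ Hset) a

def Fhom : Matrix.SpecialLinearGroup (Fin 2) ℤ →* Multiplicative (ZMod 3 × ZMod 4) where
  toFun g := Multiplicative.ofAdd (F g)
  map_one' := by show Multiplicative.ofAdd (F 1) = 1; rw [F_one]; rfl
  map_mul' a b := by
    show Multiplicative.ofAdd (F (a * b)) = Multiplicative.ofAdd (F a) * Multiplicative.ofAdd (F b)
    rw [F_mul]; rfl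

def crt : Multiplicative (ZMod 12) ≃* Multiplicative (ZMod 3 × ZMod 4) :=
  AddEquiv.toMultiplicative (ZMod.chineseRemainder (show Nat.Coprime 3 4 by decide)).toAddEquiv

def phi : Matrix.SpecialLinearGroup (Fin 2) ℤ →* Multiplicative (ZMod 12) :=
  crt.symm.toMonoidHom.comp Fhom

theorem phi_T : phi T = Multiplicative.ofAdd (1 : ZMod 12) := by
  have h1 : Fhom T = Multiplicative.ofAdd ((1 : ZMod 3), (1 : ZMod 4)) := by
    show Multiplicative.ofAdd (F T) = _
    have : F T = ((1 : ZMod 3), (1 : ZMod 4)) := by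
      simp only [F]
      rw [dT3, dT4]
    rw [this]
  show crt.symm (Fhom T) = _
  rw [h1, MulEquiv.symm_apply_eq]
  show Multiplicative.ofAdd ((ZMod.chineseRemainder (show Nat.Coprime 3 4 by decide)) (1 : ZMod 12)) = _
  rw [_root_.map_one]
  rfl

/-! ### The inverse homomorphism -/

local notation "tAb" => Abelianization.of (G := Matrix.SpecialLinearGroup (Fin 2) ℤ) T

theorem rel1 : ((S * T) ^ 3 : Matrix.SpecialLinearGroup (Fin 2) ℤ) = S ^ 2 := by
  apply Subtype.ext
  show (S.1 * T.1) ^ 3 = S.1 ^ 2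
  decide

theorem rel2 : ((S : Matrix.SpecialLinearGroup (Fin 2) ℤ)) ^ 4 = 1 := by
  apply Subtype.ext
  show S.1 ^ 4 = (1 : Matrix (Fin 2) (Fin 2) ℤ)
  decide

theorem ab_rel : Abelianization.of S * tAb ^ 3 = 1 := by
  have h : Abelianization.of S ^ 3 * tAb ^ 3 = Abelianization.of S ^ 2 := by
    have := congrArg (Abelianization.of
      (G := Matrix.SpecialLinearGroup (Fin 2) ℤ)) rel1
    rw [_root_.map_pow, _root_.map_mul, _root_.map_pow, mul_pow] at this
    exact this
  calc Abelianization.of S * tAb ^ 3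
      = (Abelianization.of S ^ 2)⁻¹ * (Abelianization.of S ^ 3 * tAb ^ 3) := by group
    _ = 1 := by rw [h]; group

theorem ab_S : Abelianization.of S = tAb ^ (-3 : ℤ) := by
  have h := ab_rel
  rw [_root_.zpow_neg]
  refine eq_inv_of_mul_eq_one_left ?_
  rw [show ((3:ℤ)) = ((3:ℕ):ℤ) from rfl, zpow_natCast, ← h]

theorem ab_T12 : tAb ^ (12 : ℕ) = 1 := by
  have h4 : Abelianization.of S ^ 4 = 1 := by
    have := congrArg (Abelianization.of
      (G := Matrix.SpecialLinearGroup (Fin 2) ℤ)) rel2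
    rw [_root_.map_pow, _root_.map_one] at this
    exact this
  have := ab_S
  calc tAb ^ (12 : ℕ) = (tAb ^ (-3 : ℤ)) ^ (-4 : ℤ) := by group
    _ = (Abelianization.of S) ^ (-4 : ℤ) := by rw [← ab_S]
    _ = ((Abelianization.of S) ^ (4 : ℕ))⁻¹ := by group
    _ = 1 := by rw [h4]; group

def psi0 : ZMod 12 →+ Additive (Abelianization (Matrix.SpecialLinearGroup (Fin 2) ℤ)) :=
  ZMod.lift 12 ⟨zmultiplesHom _ (Additive.ofMul tAb), by
    show ((12 : ℤ) • Additive.ofMul tAb) = 0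
    rw [← ofMul_zpow, show ((12:ℤ)) = ((12:ℕ):ℤ) from rfl, zpow_natCast, ab_T12]
    rfl⟩

def psi : Multiplicative (ZMod 12) →* Abelianization (Matrix.SpecialLinearGroup (Fin 2) ℤ) :=
  AddMonoidHom.toMultiplicativeLeft psi0

theorem psi_int (k : ℤ) : psi (Multiplicative.ofAdd ((k : ZMod 12))) = tAb ^ k := by
  show Additive.toMul (psi0 ((k : ZMod 12))) = tAb ^ k
  unfold psi0
  rw [ZMod.lift_coe]
  show Additive.toMul ((k : ℤ) • Additive.ofMul tAb) = tAb ^ k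
  rw [← ofMul_zpow]
  rfl

end Stmt9

/-- The matrix `[[1,1],[0,1]]` as an element of `SL₂(ℤ)`. -/
def T9 : Matrix.SpecialLinearGroup (Fin 2) ℤ :=
  ⟨!![1, 1; 0, 1], by norm_num [Matrix.det_fin_two_of]⟩

/-- the abelianization of `SL₂(ℤ)` is cyclic of order 12, generated by the image
of the matrix `[[1,1],[0,1]]`. -/
theorem stmt_9 :
    ∃ e : Abelianization (Matrix.SpecialLinearGroup (Fin 2) ℤ) ≃* Multiplicative (ZMod 12),
      e (Abelianization.of T9) = Multiplicative.ofAdd (1 : ZMod 12) := by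
  classical
  set phi' : Abelianization (Matrix.SpecialLinearGroup (Fin 2) ℤ) →* Multiplicative (ZMod 12) :=
    Abelianization.lift Stmt9.phi with hphi'
  have hphiT : phi' (Abelianization.of ModularGroup.T) = Multiplicative.ofAdd (1 : ZMod 12) := by
    rw [hphi', Abelianization.lift_apply_of, Stmt9.phi_T]
  have hofAdd : ∀ k : ℤ, (Multiplicative.ofAdd (1 : ZMod 12)) ^ k
      = Multiplicative.ofAdd ((k : ZMod 12)) := by
    intro k
    rw [← ofAdd_zsmul, zsmul_one]
  have comp1 : phi'.comp Stmt9.psi = MonoidHom.id _ := by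
    ext x
    show phi' (Stmt9.psi x) = x
    have hx : x = Multiplicative.ofAdd ((((Multiplicative.toAdd x).val : ℤ) : ZMod 12)) := by
      rw [Int.cast_natCast]; exact (ZMod.natCast_zmod_val _).symm
    rw [hx, Stmt9.psi_int, map_zpow, hphiT, hofAdd]
  have key : ∀ g, Stmt9.psi (phi' (Abelianization.of g)) = Abelianization.of g := by
    have hsub : ∀ g ∈ Subgroup.closure
        ({ModularGroup.S, ModularGroup.T} : Set (Matrix.SpecialLinearGroup (Fin 2) ℤ)),
        Stmt9.psi (phi' (Abelianization.of g)) = Abelianization.of g := by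
      intro g hg
      induction hg using Subgroup.closure_induction with
      | mem x hx =>
        rcases hx with rfl | rfl
        · rw [Stmt9.ab_S, map_zpow, hphiT, hofAdd, Stmt9.psi_int]
        · rw [hphiT, show (1 : ZMod 12) = ((1 : ℤ) : ZMod 12) from by norm_num,
            Stmt9.psi_int, zpow_one]
      | one => simp
      | mul x y hx hy ihx ihy => simp only [_root_.map_mul, ihx, ihy]
      | inv x hx ih => simp only [_root_.map_inv, ih]
    intro g
    exact hsub g (Stmt9.closure_ST ▸ Subgroup.mem_top g)
  have comp2 : (Stmt9.psi).comp phi' = MonoidHom.id _ := by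
    ext b
    simpa using key b
  refine ⟨MonoidHom.toMulEquiv phi' Stmt9.psi comp2 comp1, ?_⟩
  have hT9 : T9 = ModularGroup.T := rfl
  show phi' (Abelianization.of T9) = _
  rw [hT9, hphiT]
end
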